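/- Let Ψ : ℝᵖ × ℝ^q → ℝ be a convex function, ‖·‖ a norm on ℝ^{p+q}, and define the factor-norm ‖h‖' = min_{d ∈ ℝ^q} ‖(h,d)‖ on ℝᵖ. Assume Ψ is C¹ with ‖∇Ψ(z) − ∇Ψ(z')‖_* ≤ L‖z−z'‖ for all z, z', and that for every u ∈ ℝᵖ the set Argmin_{y} Ψ(u,y) is nonempty. Then Ψ̄(u) = min_y Ψ(u,y) is convex and continuously differentiable on ℝᵖ with ∇Ψ̄ Lipschitz continuous with constant L with respect to ‖·‖' (i.e., with respect to the conjugate of ‖·‖' on the gradient side). -/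

import Mathlib

open scoped RealInnerProductSpace
open Real Matrix

/-- `N` is a norm on the real vector space `E`. -/
def IsNorm {E : Type*} [AddCommGroup E] [Module ℝ E] (N : E → ℝ) : Prop :=
  (∀ x, 0 ≤ N x) ∧ (∀ x, N x = 0 ↔ x = 0) ∧
    (∀ (c : ℝ) (x), N (c • x) = |c| * N x) ∧ ∀ x y, N (x + y) ≤ N x + N y

/-- The conjugate (dual) norm of `N`: `‖y‖_* = sup {⟨y,x⟩ : N x ≤ 1}`. -/
noncomputable def dualNorm {E : Type*} [NormedAddCommGroup E] [InnerProductSpace ℝ E]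
    (N : E → ℝ) (y : E) : ℝ :=
  sSup {r | ∃ x, N x ≤ 1 ∧ r = ⟪y, x⟫}

/-- `N` is a `κ`-smooth norm: its square `Φ` is `C¹` and satisfies
`Φ(x+h) ≤ Φ(x) + ⟨∇Φ(x),h⟩ + κ Φ(h)`. -/
def IsSmoothNorm {E : Type*} [NormedAddCommGroup E] [InnerProductSpace ℝ E] [CompleteSpace E]
    (κ : ℝ) (N : E → ℝ) : Prop :=
  IsNorm N ∧ ContDiff ℝ 1 (fun x => N x ^ 2) ∧
    ∀ x h, N (x + h) ^ 2 ≤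
      N x ^ 2 + ⟪gradient (fun z => N z ^ 2) x, h⟫ + κ * N h ^ 2

/-- `N` is a `(κ,ς)`-regular norm: within factor `ς` of a `κ`-smooth norm. -/
def IsRegularNorm {E : Type*} [NormedAddCommGroup E] [InnerProductSpace ℝ E] [CompleteSpace E]
    (κ ς : ℝ) (N : E → ℝ) : Prop :=
  ∃ M : E → ℝ, IsSmoothNorm κ M ∧ ∀ x, ς⁻¹ * M x ≤ N x ∧ N x ≤ ς * M x

/-!
Partial minimization preserves convexity. At a minimizer `y(u)` the `y`-component of `∇Ψ`
vanishes, so `Ψ(·, y(u))` touches `Ψ̄` from above at `u`, while the gradient inequality for `Ψ`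
gives a supporting hyperplane from below with the same slope; hence `∇Ψ̄(u)` is the `u`-component
of `∇Ψ(u, y(u))`. A convex function whose gradient is `L`-Lipschitz is cocoercive:
`‖∇Ψ z - ∇Ψ z'‖_*² ≤ L ⟪∇Ψ z - ∇Ψ z', z - z'⟫`. Pairing a gradient difference with vanishing
`y`-component against `(h, d)` only sees `h`, so both the dual factor-norm of `∇Ψ̄ u - ∇Ψ̄ u'`
and `⟪∇Ψ z - ∇Ψ z', z - z'⟫ / ‖u - u'‖'` are bounded by `‖∇Ψ z - ∇Ψ z'‖_*`, and cocoercivity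
turns this into the Lipschitz bound.
-/

namespace IsNorm

variable {E : Type*} [NormedAddCommGroup E] [NormedSpace ℝ E] {N : E → ℝ}

lemma apply_zero (hN : IsNorm N) : N 0 = 0 := (hN.2.1 0).2 rfl

lemma apply_neg (hN : IsNorm N) (x : E) : N (-x) = N x := by
  simpa using hN.2.2.1 (-1) x

lemma convexOn (hN : IsNorm N) : ConvexOn ℝ Set.univ N := by
  refine ⟨convex_univ, fun x _ y _ a b ha hb _ => ?_⟩
  calc N (a • x + b • y) ≤ N (a • x) + N (b • y) := hN.2.2.2 _ _
    _ = a * N x + b * N y := by rw [hN.2.2.1, hN.2.2.1, abs_of_nonneg ha, abs_of_nonneg hb]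

lemma continuous [FiniteDimensional ℝ E] (hN : IsNorm N) : Continuous N :=
  continuousOn_univ.1 (hN.convexOn.continuousOn isOpen_univ)

lemma apply_eq_norm_mul (hN : IsNorm N) (x : E) : N x = ‖x‖ * N (‖x‖⁻¹ • x) := by
  rw [hN.2.2.1, abs_of_nonneg (inv_nonneg.2 (norm_nonneg x)), ← mul_assoc]
  rcases eq_or_ne x 0 with rfl | hx
  · simp [hN.apply_zero]
  · rw [mul_inv_cancel₀ (norm_ne_zero_iff.2 hx), one_mul]

lemma exists_bounds [FiniteDimensional ℝ E] (hN : IsNorm N) :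
    ∃ c C, 0 < c ∧ 0 < C ∧ ∀ x, c * ‖x‖ ≤ N x ∧ N x ≤ C * ‖x‖ := by
  rcases subsingleton_or_nontrivial E with hE | hE
  · exact ⟨1, 1, one_pos, one_pos, fun x => by simp [Subsingleton.elim x 0, hN.apply_zero]⟩
  have hS : (Metric.sphere (0 : E) 1).Nonempty := NormedSpace.sphere_nonempty.2 zero_le_one
  have hpos : ∀ a ∈ Metric.sphere (0 : E) 1, 0 < N a := fun a ha =>
    (hN.1 a).lt_of_ne fun h => by simp [(hN.2.1 a).1 h.symm] at ha
  obtain ⟨a, ha, hamin⟩ := (isCompact_sphere 0 1).exists_isMinOn hS hN.continuous.continuousOn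
  obtain ⟨b, hb, hbmax⟩ := (isCompact_sphere 0 1).exists_isMaxOn hS hN.continuous.continuousOn
  refine ⟨N a, N b, hpos a ha, hpos b hb, fun x => ?_⟩
  rcases eq_or_ne x 0 with rfl | hx
  · simp [hN.apply_zero]
  have hxS : ‖x‖⁻¹ • x ∈ Metric.sphere (0 : E) 1 := by
    simp [norm_smul, inv_mul_cancel₀ (norm_ne_zero_iff.2 hx)]
  rw [hN.apply_eq_norm_mul x, mul_comm (N a), mul_comm (N b)]
  exact ⟨by gcongr; exact hamin hxS, by gcongr; exact hbmax hxS⟩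

end IsNorm

section DualNorm

variable {E : Type*} [NormedAddCommGroup E] [InnerProductSpace ℝ E] {M : E → ℝ} {c : ℝ}

lemma bddAbove_dualNorm_set (hc : 0 < c) (hlow : ∀ x, c * ‖x‖ ≤ M x) (v : E) :
    BddAbove {r | ∃ x, M x ≤ 1 ∧ r = ⟪v, x⟫} := by
  refine ⟨‖v‖ / c, ?_⟩
  rintro _ ⟨x, hx, rfl⟩
  have hxc : ‖x‖ ≤ 1 / c := (le_div_iff₀' hc).2 ((hlow x).trans hx)
  calc ⟪v, x⟫ ≤ ‖v‖ * ‖x‖ := real_inner_le_norm v x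
    _ ≤ ‖v‖ * (1 / c) := by gcongr
    _ = ‖v‖ / c := mul_one_div _ _

lemma le_dualNorm (hc : 0 < c) (hlow : ∀ x, c * ‖x‖ ≤ M x) {v x : E} (hx : M x ≤ 1) :
    ⟪v, x⟫ ≤ dualNorm M v :=
  le_csSup (bddAbove_dualNorm_set hc hlow v) ⟨x, hx, rfl⟩

lemma dualNorm_le (hM : M 0 ≤ 1) {v : E} {b : ℝ} (h : ∀ x, M x ≤ 1 → ⟪v, x⟫ ≤ b) :
    dualNorm M v ≤ b :=
  csSup_le ⟨_, 0, hM, rfl⟩ (by rintro _ ⟨x, hx, rfl⟩; exact h x hx)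

lemma norm_le_mul_dualNorm (hc : 0 < c) (hlow : ∀ x, c * ‖x‖ ≤ M x) {C : ℝ} (hC : 0 < C)
    (hup : ∀ x, M x ≤ C * ‖x‖) (v : E) : ‖v‖ ≤ C * dualNorm M v := by
  -- no case split on `v = 0` is needed, as `‖v‖⁻¹ * ‖v‖ ^ 2 = ‖v‖` also holds there
  have hx : M ((C⁻¹ * ‖v‖⁻¹) • v) ≤ 1 := by
    refine (hup _).trans ?_
    rw [norm_smul, Real.norm_of_nonneg (by positivity), ← mul_assoc, ← mul_assoc,
      mul_inv_cancel₀ hC.ne', one_mul]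
    exact inv_mul_le_one_of_le₀ le_rfl (norm_nonneg v)
  have hinner : ⟪v, (C⁻¹ * ‖v‖⁻¹) • v⟫ = C⁻¹ * ‖v‖ := by
    rw [real_inner_smul_right, real_inner_self_eq_norm_sq, sq, mul_assoc, ← mul_assoc ‖v‖⁻¹,
      inv_mul_mul_self]
  calc ‖v‖ = C * (C⁻¹ * ‖v‖) := by field_simp
    _ ≤ C * dualNorm M v := by gcongr; exact hinner ▸ le_dualNorm hc hlow hx

lemma continuous_of_dualNorm_sub_le (hc : 0 < c) (hlow : ∀ x, c * ‖x‖ ≤ M x) {C : ℝ}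
    (hC : 0 < C) (hup : ∀ x, M x ≤ C * ‖x‖) {L : ℝ} (hL : 0 ≤ L) {g : E → E}
    (hg : ∀ u u', dualNorm M (g u - g u') ≤ L * M (u - u')) : Continuous g := by
  refine (LipschitzWith.of_dist_le' (K := C * L * C) fun u u' => ?_).continuous
  rw [dist_eq_norm, dist_eq_norm]
  calc ‖g u - g u'‖ ≤ C * dualNorm M (g u - g u') := norm_le_mul_dualNorm hc hlow hC hup _
    _ ≤ C * (L * (C * ‖u - u'‖)) := by gcongr; exact (hg u u').trans (by gcongr; exact hup _)
    _ = C * L * C * ‖u - u'‖ := by ring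

lemma IsNorm.dualNorm_neg (hM : IsNorm M) (v : E) : dualNorm M (-v) = dualNorm M v := by
  unfold dualNorm
  congr 1
  ext r
  constructor <;> rintro ⟨x, hx, rfl⟩ <;> exact ⟨-x, by rwa [hM.apply_neg], by simp⟩

end DualNorm

namespace IsNorm

variable {E : Type*} [NormedAddCommGroup E] [InnerProductSpace ℝ E] [FiniteDimensional ℝ E]
  {N : E → ℝ}

lemma dualNorm_nonneg (hN : IsNorm N) (v : E) : 0 ≤ dualNorm N v := by
  obtain ⟨c, _, hc, _, hb⟩ := hN.exists_bounds
  simpa using le_dualNorm hc (fun x => (hb x).1) (v := v) (x := 0) (by simp [hN.apply_zero])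

lemma exists_inner_eq_dualNorm (hN : IsNorm N) (v : E) :
    ∃ x, N x ≤ 1 ∧ ⟪v, x⟫ = dualNorm N v := by
  obtain ⟨c, _, hc, _, hb⟩ := hN.exists_bounds
  have hK : IsCompact {x | N x ≤ 1} := by
    refine Metric.isCompact_of_isClosed_isBounded (isClosed_le hN.continuous continuous_const)
      ((Metric.isBounded_closedBall (x := 0) (r := 1 / c)).subset fun x hx => ?_)
    rw [mem_closedBall_zero_iff, le_div_iff₀' hc]
    exact (hb x).1.trans hx
  obtain ⟨x, hx, hmax⟩ := hK.exists_isMaxOn ⟨0, by simp [hN.apply_zero]⟩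
    (continuous_const.inner continuous_id : Continuous fun x : E => ⟪v, x⟫).continuousOn
  exact ⟨x, hx, le_antisymm (le_dualNorm hc (fun y => (hb y).1) hx)
    (dualNorm_le (by simp [hN.apply_zero]) fun y hy => isMaxOn_iff.1 hmax y hy)⟩

lemma inner_le_dualNorm_mul (hN : IsNorm N) (v x : E) : ⟪v, x⟫ ≤ dualNorm N v * N x := by
  obtain ⟨c, _, hc, _, hb⟩ := hN.exists_bounds
  rcases (hN.1 x).eq_or_lt with hx | hx
  · simp [(hN.2.1 x).1 hx.symm, hN.apply_zero]
  have h1 : N ((N x)⁻¹ • x) ≤ 1 := by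
    rw [hN.2.2.1, abs_of_pos (inv_pos.2 hx), inv_mul_cancel₀ hx.ne']
  have := le_dualNorm hc (fun y => (hb y).1) (v := v) h1
  rwa [real_inner_smul_right, inv_mul_le_iff₀ hx, mul_comm] at this

end IsNorm

section Smooth

variable {E : Type*} [NormedAddCommGroup E] [InnerProductSpace ℝ E] [CompleteSpace E]
  {f : E → ℝ} {f' : E → E}

lemma HasGradientAt.hasDerivAt_comp_add_smul {g z d : E} {t : ℝ}
    (hf : HasGradientAt f g (z + t • d)) :
    HasDerivAt (fun s : ℝ => f (z + s • d)) ⟪g, d⟫ t := by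
  have hline : HasDerivAt (fun s : ℝ => z + s • d) d t := by
    simpa using ((hasDerivAt_id t).smul_const d).const_add z
  simpa [InnerProductSpace.toDual_apply_apply, Function.comp_def] using
    (hasGradientAt_iff_hasFDerivAt.mp hf).comp_hasDerivAt t hline

lemma ConvexOn.add_inner_sub_le (hf : ConvexOn ℝ Set.univ f) {g z : E}
    (hg : HasGradientAt f g z) (z' : E) : f z + ⟪g, z' - z⟫ ≤ f z' := by
  have hline : ConvexOn ℝ Set.univ (fun t : ℝ => f (z + t • (z' - z))) := by
    refine (hf.comp_affineMap (AffineMap.lineMap z z') : ConvexOn ℝ Set.univ _).congr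
      fun t _ => ?_
    simp [AffineMap.lineMap_apply_module', add_comm]
  have := hline.le_slope_of_hasDerivAt (Set.mem_univ 0) (Set.mem_univ 1) zero_lt_one
    (HasGradientAt.hasDerivAt_comp_add_smul (by simpa using hg))
  simp only [slope, sub_zero, inv_one, one_smul, add_sub_cancel, zero_smul, add_zero, vsub_eq_sub,
    smul_eq_mul, one_mul] at this
  linarith

variable [FiniteDimensional ℝ E] {N : E → ℝ} {L : ℝ}

lemma IsNorm.apply_add_le (hN : IsNorm N) (hf : ∀ z, HasGradientAt f (f' z) z)
    (hlip : ∀ z z', dualNorm N (f' z - f' z') ≤ L * N (z - z')) (z h : E) :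
    f (z + h) ≤ f z + ⟪f' z, h⟫ + L / 2 * N h ^ 2 := by
  set φ : ℝ → ℝ := fun t => f (z + t • h) - t * ⟪f' z, h⟫ - L / 2 * t ^ 2 * N h ^ 2
  have hφ : ∀ t, HasDerivAt φ (⟪f' (z + t • h), h⟫ - ⟪f' z, h⟫ - L * t * N h ^ 2) t := by
    intro t
    refine ((((hf (z + t • h)).hasDerivAt_comp_add_smul).sub
      ((hasDerivAt_id t).mul_const ⟪f' z, h⟫)).sub
      (((hasDerivAt_pow 2 t).const_mul (L / 2)).mul_const (N h ^ 2))).congr_deriv ?_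
    simp only [Nat.cast_ofNat, pow_one, Nat.add_one_sub_one, one_mul]
    ring
  have hanti : AntitoneOn φ (Set.Ici 0) := by
    refine antitoneOn_of_hasDerivWithinAt_nonpos (convex_Ici 0)
      (fun t _ => (hφ t).continuousAt.continuousWithinAt) (fun t _ => (hφ t).hasDerivWithinAt)
      fun t ht => ?_
    rw [interior_Ici] at ht
    have h1 := hN.inner_le_dualNorm_mul (f' (z + t • h) - f' z) h
    have h2 : dualNorm N (f' (z + t • h) - f' z) ≤ L * (t * N h) := by
      simpa [hN.2.2.1, abs_of_pos (Set.mem_Ioi.1 ht)] using hlip (z + t • h) z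
    rw [inner_sub_left] at h1
    nlinarith [mul_le_mul_of_nonneg_right h2 (hN.1 h)]
  have := hanti Set.self_mem_Ici (Set.mem_Ici.2 zero_le_one) zero_le_one
  simp only [φ, one_smul, one_mul, one_pow, mul_one, zero_smul, add_zero, zero_mul, sub_zero,
    ne_eq, OfNat.ofNat_ne_zero, not_false_eq_true, zero_pow, mul_zero] at this
  linarith

/-- Test the minimality of `z` for `f - ⟪f' z, ·⟫` at the point `z' - (s / L) • x`, where `x`
attains the dual norm `s`. -/
lemma ConvexOn.add_inner_sub_add_sq_dualNorm_le (hconv : ConvexOn ℝ Set.univ f) (hN : IsNorm N)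
    (hf : ∀ z, HasGradientAt f (f' z) z)
    (hlip : ∀ z z', dualNorm N (f' z - f' z') ≤ L * N (z - z')) (hL : 0 < L) (z z' : E) :
    f z + ⟪f' z, z' - z⟫ + dualNorm N (f' z' - f' z) ^ 2 / (2 * L) ≤ f z' := by
  set s := dualNorm N (f' z' - f' z)
  obtain ⟨x, hx, hxs⟩ := hN.exists_inner_eq_dualNorm (f' z' - f' z)
  set t := s / L
  have ht : 0 ≤ t := div_nonneg (hN.dualNorm_nonneg _) hL.le
  have hmin := hconv.add_inner_sub_le (hf z) (z' + -(t • x))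
  have hdesc := hN.apply_add_le hf hlip z' (-(t • x))
  have hNtx : N (-(t • x)) ^ 2 ≤ t ^ 2 := by
    rw [hN.apply_neg, hN.2.2.1, abs_of_nonneg ht]
    have := hN.1 x
    gcongr
    exact mul_le_of_le_one_right ht hx
  have hshift : z' + -(t • x) - z = (z' - z) + -(t • x) := by abel
  rw [hshift, inner_add_right] at hmin
  rw [inner_sub_left] at hxs
  simp only [inner_neg_right, real_inner_smul_right] at hmin hdesc
  have hquad : t * s - L / 2 * t ^ 2 = s ^ 2 / (2 * L) := by
    simp only [t]; field_simp; ring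
  nlinarith [mul_le_mul_of_nonneg_left hNtx (by positivity : 0 ≤ L / 2)]

lemma ConvexOn.sq_dualNorm_sub_le_mul_inner (hconv : ConvexOn ℝ Set.univ f) (hN : IsNorm N)
    (hf : ∀ z, HasGradientAt f (f' z) z)
    (hlip : ∀ z z', dualNorm N (f' z - f' z') ≤ L * N (z - z')) (hL : 0 ≤ L) (z z' : E) :
    dualNorm N (f' z - f' z') ^ 2 ≤ L * ⟪f' z - f' z', z - z'⟫ := by
  have hs := hN.dualNorm_nonneg (f' z - f' z')
  rcases hL.eq_or_lt with rfl | hL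
  · have := hlip z z'
    rw [zero_mul] at this
    nlinarith
  have h1 := hconv.add_inner_sub_add_sq_dualNorm_le hN hf hlip hL z' z
  have h2 := hconv.add_inner_sub_add_sq_dualNorm_le hN hf hlip hL z z'
  rw [← neg_sub (f' z), hN.dualNorm_neg] at h2
  have hinner : ⟪f' z - f' z', z - z'⟫ = -⟪f' z, z' - z⟫ - ⟪f' z', z - z'⟫ := by
    rw [inner_sub_left, ← neg_sub z, inner_neg_right, neg_neg]
  have hsq : dualNorm N (f' z - f' z') ^ 2 =
      L * (2 * (dualNorm N (f' z - f' z') ^ 2 / (2 * L))) := by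
    field_simp
  rw [hsq]
  gcongr
  linarith

end Smooth

section ProductGradient

variable {E F : Type*} [NormedAddCommGroup E] [InnerProductSpace ℝ E] [CompleteSpace E]
  [NormedAddCommGroup F] [InnerProductSpace ℝ F] [CompleteSpace F]
  {f : WithLp 2 (E × F) → ℝ} {g : WithLp 2 (E × F)} {u : E} {y : F}

lemma HasGradientAt.comp_toLp_left (hf : HasGradientAt f g (WithLp.toLp 2 (u, y))) :
    HasGradientAt (fun u => f (WithLp.toLp 2 (u, y))) g.fst u := by
  have hι := (WithLp.prodContinuousLinearEquiv 2 ℝ E F).symm.hasFDerivAt.comp u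
    ((hasFDerivAt_id u).prodMk (hasFDerivAt_const y u))
  rw [hasGradientAt_iff_hasFDerivAt] at hf ⊢
  refine (hf.comp u hι).congr_fderiv ?_
  ext x
  simp

lemma HasGradientAt.comp_toLp_right (hf : HasGradientAt f g (WithLp.toLp 2 (u, y))) :
    HasGradientAt (fun y => f (WithLp.toLp 2 (u, y))) g.snd y := by
  have hι := (WithLp.prodContinuousLinearEquiv 2 ℝ E F).symm.hasFDerivAt.comp y
    ((hasFDerivAt_const u y).prodMk (hasFDerivAt_id y))
  rw [hasGradientAt_iff_hasFDerivAt] at hf ⊢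
  refine (hf.comp y hι).congr_fderiv ?_
  ext x
  simp

lemma HasGradientAt.snd_eq_zero_of_forall_le (hf : HasGradientAt f g (WithLp.toLp 2 (u, y)))
    (hmin : ∀ y', f (WithLp.toLp 2 (u, y)) ≤ f (WithLp.toLp 2 (u, y'))) : g.snd = 0 := by
  have hloc : IsLocalMin (fun y' => f (WithLp.toLp 2 (u, y'))) y :=
    Filter.Eventually.of_forall hmin
  simpa using hloc.hasFDerivAt_eq_zero (hasGradientAt_iff_hasFDerivAt.1 hf.comp_toLp_right)

end ProductGradient

section FactorNorm

variable {E F : Type*}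

noncomputable def factorNorm (N : WithLp 2 (E × F) → ℝ) (h : E) : ℝ :=
  ⨅ d : F, N (WithLp.toLp 2 (h, d))

variable [NormedAddCommGroup E] [NormedAddCommGroup F] {N : WithLp 2 (E × F) → ℝ}

lemma mul_norm_le_factorNorm {c : ℝ} (hc : 0 ≤ c) (hlow : ∀ z, c * ‖z‖ ≤ N z) (h : E) :
    c * ‖h‖ ≤ factorNorm N h :=
  le_ciInf fun d =>
    (mul_le_mul_of_nonneg_left (WithLp.norm_fst_le _ (WithLp.toLp 2 (h, d))) hc).trans (hlow _)

variable [NormedSpace ℝ E] [NormedSpace ℝ F]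

lemma factorNorm_le (hN : IsNorm N) (h : E) (d : F) :
    factorNorm N h ≤ N (WithLp.toLp 2 (h, d)) :=
  ciInf_le ⟨0, by rintro _ ⟨d, rfl⟩; exact hN.1 _⟩ d

lemma factorNorm_nonneg (hN : IsNorm N) (h : E) : 0 ≤ factorNorm N h :=
  le_ciInf fun _ => hN.1 _

lemma factorNorm_le_mul_norm (hN : IsNorm N) {C : ℝ} (hup : ∀ z, N z ≤ C * ‖z‖) (h : E) :
    factorNorm N h ≤ C * ‖h‖ :=
  (factorNorm_le hN h 0).trans (by simpa using hup (WithLp.toLp 2 (h, 0)))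

end FactorNorm

section FactorDualNorm

variable {E F : Type*} [NormedAddCommGroup E] [InnerProductSpace ℝ E] [FiniteDimensional ℝ E]
  [NormedAddCommGroup F] [InnerProductSpace ℝ F] [FiniteDimensional ℝ F]
  {N : WithLp 2 (E × F) → ℝ} {v : WithLp 2 (E × F)}

lemma inner_fst_le_dualNorm_mul_factorNorm (hN : IsNorm N) (hv : v.snd = 0) (h : E) :
    ⟪v.fst, h⟫ ≤ dualNorm N v * factorNorm N h := by
  rw [factorNorm, Real.mul_iInf_of_nonneg (hN.dualNorm_nonneg v)]
  exact le_ciInf fun d => by simpa [hv] using hN.inner_le_dualNorm_mul v (WithLp.toLp 2 (h, d))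

lemma dualNorm_factorNorm_fst_le (hN : IsNorm N) (hv : v.snd = 0) :
    dualNorm (factorNorm N) v.fst ≤ dualNorm N v := by
  have h0 : factorNorm N 0 ≤ 1 :=
    (factorNorm_le hN 0 0).trans (show N 0 ≤ 1 by simp [hN.apply_zero])
  refine dualNorm_le h0 fun h hh => (inner_fst_le_dualNorm_mul_factorNorm hN hv h).trans ?_
  exact mul_le_of_le_one_right (hN.dualNorm_nonneg v) hh

end FactorDualNorm

section PartialMinimization

variable {E F : Type*} [NormedAddCommGroup E] [InnerProductSpace ℝ E]
  [NormedAddCommGroup F] [InnerProductSpace ℝ F]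
  {Ψ : WithLp 2 (E × F) → ℝ} {Ψ' : WithLp 2 (E × F) → WithLp 2 (E × F)} {y : E → F}

lemma ConvexOn.comp_toLp_argmin (hconv : ConvexOn ℝ Set.univ Ψ)
    (hy : ∀ u y', Ψ (WithLp.toLp 2 (u, y u)) ≤ Ψ (WithLp.toLp 2 (u, y'))) :
    ConvexOn ℝ Set.univ fun u => Ψ (WithLp.toLp 2 (u, y u)) := by
  refine ⟨convex_univ, fun u _ u' _ a b ha hb hab => ?_⟩
  calc Ψ (WithLp.toLp 2 (a • u + b • u', y (a • u + b • u')))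
      ≤ Ψ (WithLp.toLp 2 (a • u + b • u', a • y u + b • y u')) := hy _ _
    _ ≤ a • Ψ (WithLp.toLp 2 (u, y u)) + b • Ψ (WithLp.toLp 2 (u', y u')) :=
      hconv.2 (Set.mem_univ (WithLp.toLp 2 (u, y u))) (Set.mem_univ (WithLp.toLp 2 (u', y u')))
        ha hb hab

variable [CompleteSpace E] [CompleteSpace F]

/-- The partial minimum is squeezed between `Ψ(·, y u)`, which is differentiable at `u`, and its
own supporting hyperplane at `u`, which the gradient inequality provides because the
`F`-component of the gradient vanishes at the minimizer. -/
lemma ConvexOn.hasGradientAt_comp_toLp_argmin (hconv : ConvexOn ℝ Set.univ Ψ)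
    (hΨ : ∀ z, HasGradientAt Ψ (Ψ' z) z)
    (hy : ∀ u y', Ψ (WithLp.toLp 2 (u, y u)) ≤ Ψ (WithLp.toLp 2 (u, y'))) (u : E) :
    HasGradientAt (fun u => Ψ (WithLp.toLp 2 (u, y u))) (Ψ' (WithLp.toLp 2 (u, y u))).fst u := by
  have hsnd := (hΨ _).snd_eq_zero_of_forall_le (hy u)
  have hsupp : ∀ u', 0 ≤ Ψ (WithLp.toLp 2 (u', y u')) - Ψ (WithLp.toLp 2 (u, y u)) -
      ⟪(Ψ' (WithLp.toLp 2 (u, y u))).fst, u' - u⟫ := by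
    intro u'
    have := hconv.add_inner_sub_le (hΨ (WithLp.toLp 2 (u, y u))) (WithLp.toLp 2 (u', y u'))
    simp only [WithLp.prod_inner_apply, WithLp.ofLp_fst, WithLp.ofLp_snd, hsnd, WithLp.sub_fst,
      WithLp.toLp_fst, inner_zero_left, add_zero] at this
    linarith
  rw [hasGradientAt_iff_isLittleO]
  refine (Asymptotics.isBigO_of_le _ fun u' => ?_).trans_isLittleO
    (hasGradientAt_iff_isLittleO.1 (hΨ (WithLp.toLp 2 (u, y u))).comp_toLp_left)
  rw [Real.norm_eq_abs, Real.norm_eq_abs, abs_of_nonneg (hsupp u')]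
  exact le_abs.2 (Or.inl (by linarith [hy u' (y u)]))

variable [FiniteDimensional ℝ E] [FiniteDimensional ℝ F] {N : WithLp 2 (E × F) → ℝ} {L : ℝ}

/-- The `F`-components of the gradients vanish at the minimizers, so cocoercivity of `∇Ψ` with
respect to `N` yields the Lipschitz bound with respect to `factorNorm N`. -/
lemma ConvexOn.dualNorm_factorNorm_sub_le (hconv : ConvexOn ℝ Set.univ Ψ) (hN : IsNorm N)
    (hΨ : ∀ z, HasGradientAt Ψ (Ψ' z) z)
    (hlip : ∀ z z', dualNorm N (Ψ' z - Ψ' z') ≤ L * N (z - z')) (hL : 0 ≤ L)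
    (hy : ∀ u y', Ψ (WithLp.toLp 2 (u, y u)) ≤ Ψ (WithLp.toLp 2 (u, y'))) (u u' : E) :
    dualNorm (factorNorm N)
        ((Ψ' (WithLp.toLp 2 (u, y u))).fst - (Ψ' (WithLp.toLp 2 (u', y u'))).fst) ≤
      L * factorNorm N (u - u') := by
  set z := WithLp.toLp 2 (u, y u)
  set z' := WithLp.toLp 2 (u', y u')
  set v := Ψ' z - Ψ' z'
  have hv : v.snd = 0 := by
    simp [v, (hΨ z).snd_eq_zero_of_forall_le (hy u), (hΨ z').snd_eq_zero_of_forall_le (hy u')]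
  have hS := hN.dualNorm_nonneg v
  have hcoco := hconv.sq_dualNorm_sub_le_mul_inner hN hΨ hlip hL z z'
  have hinner : ⟪v, z - z'⟫ = ⟪v.fst, u - u'⟫ := by
    simp [WithLp.prod_inner_apply, hv, z, z']
  have hfac := inner_fst_le_dualNorm_mul_factorNorm hN hv (u - u')
  rw [← WithLp.sub_fst]
  refine (dualNorm_factorNorm_fst_le hN hv).trans ?_
  rcases hS.eq_or_lt with h0 | hpos
  · exact h0 ▸ mul_nonneg hL (factorNorm_nonneg hN _)
  · nlinarith

end PartialMinimization

theorem stmt_8_general {p q : ℕ}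
    (N : WithLp 2 (EuclideanSpace ℝ (Fin p) × EuclideanSpace ℝ (Fin q)) → ℝ)
    (hN : IsNorm N) (L : ℝ) (hL : 0 ≤ L)
    (Ψ : WithLp 2 (EuclideanSpace ℝ (Fin p) × EuclideanSpace ℝ (Fin q)) → ℝ)
    (Ψ' : WithLp 2 (EuclideanSpace ℝ (Fin p) × EuclideanSpace ℝ (Fin q)) →
      WithLp 2 (EuclideanSpace ℝ (Fin p) × EuclideanSpace ℝ (Fin q)))
    (hconv : ConvexOn ℝ Set.univ Ψ)
    (hΨ : ∀ z, HasGradientAt Ψ (Ψ' z) z)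
    (hlip : ∀ z z', dualNorm N (Ψ' z - Ψ' z') ≤ L * N (z - z'))
    (hmin : ∀ u : EuclideanSpace ℝ (Fin p), ∃ y, ∀ y',
      Ψ (WithLp.toLp 2 ((u, y) : EuclideanSpace ℝ (Fin p) × EuclideanSpace ℝ (Fin q))) ≤
        Ψ (WithLp.toLp 2 ((u, y') : EuclideanSpace ℝ (Fin p) × EuclideanSpace ℝ (Fin q))))
    (N' : EuclideanSpace ℝ (Fin p) → ℝ)
    (hN' : ∀ h, N' h = sInf {r | ∃ d : EuclideanSpace ℝ (Fin q),
      r = N (WithLp.toLp 2 ((h, d) : EuclideanSpace ℝ (Fin p) × EuclideanSpace ℝ (Fin q)))})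
    (Ψb : EuclideanSpace ℝ (Fin p) → ℝ)
    (hΨb : ∀ u, Ψb u = sInf {r | ∃ y : EuclideanSpace ℝ (Fin q),
      r = Ψ (WithLp.toLp 2 ((u, y) : EuclideanSpace ℝ (Fin p) × EuclideanSpace ℝ (Fin q)))}) :
    ConvexOn ℝ Set.univ Ψb ∧
      ∃ Ψb' : EuclideanSpace ℝ (Fin p) → EuclideanSpace ℝ (Fin p),
        (∀ u, HasGradientAt Ψb (Ψb' u) u) ∧ Continuous Ψb' ∧
          ∀ u u', dualNorm N' (Ψb' u - Ψb' u') ≤ L * N' (u - u') := by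
  choose y hy using hmin
  obtain rfl : Ψb = fun u => Ψ (WithLp.toLp 2 (u, y u)) := funext fun u => by
    rw [hΨb]
    exact IsLeast.csInf_eq ⟨⟨y u, rfl⟩, by rintro _ ⟨y', rfl⟩; exact hy u y'⟩
  obtain rfl : N' = factorNorm N := funext fun h => by
    rw [hN', factorNorm, ← sInf_range]
    congr 1
    ext
    simp [eq_comm]
  obtain ⟨c, C, hc, hC, hbounds⟩ := hN.exists_bounds
  have hlipb := hconv.dualNorm_factorNorm_sub_le hN hΨ hlip hL hy
  refine ⟨hconv.comp_toLp_argmin hy, _, hconv.hasGradientAt_comp_toLp_argmin hΨ hy, ?_, hlipb⟩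
  exact continuous_of_dualNorm_sub_le hc (mul_norm_le_factorNorm hc.le fun z => (hbounds z).1) hC
    (factorNorm_le_mul_norm hN fun z => (hbounds z).2) hL hlipb

/-- partial minimization of a convex `C¹` function with
`L`-Lipschitz gradient (w.r.t. a norm `N` on `ℝ^{p+q}`) yields a convex `C¹`
function whose gradient is `L`-Lipschitz w.r.t. the factor-norm `N'`. -/
theorem stmt_8 {p q : ℕ}
    (N : WithLp 2 (EuclideanSpace ℝ (Fin p) × EuclideanSpace ℝ (Fin q)) → ℝ)
    (hN : IsNorm N) (L : ℝ) (hL : 0 ≤ L)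
    (Ψ : WithLp 2 (EuclideanSpace ℝ (Fin p) × EuclideanSpace ℝ (Fin q)) → ℝ)
    (Ψ' : WithLp 2 (EuclideanSpace ℝ (Fin p) × EuclideanSpace ℝ (Fin q)) →
      WithLp 2 (EuclideanSpace ℝ (Fin p) × EuclideanSpace ℝ (Fin q)))
    (hconv : ConvexOn ℝ Set.univ Ψ)
    (hΨ : ∀ z, HasGradientAt Ψ (Ψ' z) z) (hΨ'c : Continuous Ψ')
    (hlip : ∀ z z', dualNorm N (Ψ' z - Ψ' z') ≤ L * N (z - z'))
    (hmin : ∀ u : EuclideanSpace ℝ (Fin p), ∃ y, ∀ y',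
      Ψ (WithLp.toLp 2 ((u, y) : EuclideanSpace ℝ (Fin p) × EuclideanSpace ℝ (Fin q))) ≤
        Ψ (WithLp.toLp 2 ((u, y') : EuclideanSpace ℝ (Fin p) × EuclideanSpace ℝ (Fin q))))
    (N' : EuclideanSpace ℝ (Fin p) → ℝ)
    (hN' : ∀ h, N' h = sInf {r | ∃ d : EuclideanSpace ℝ (Fin q),
      r = N (WithLp.toLp 2 ((h, d) : EuclideanSpace ℝ (Fin p) × EuclideanSpace ℝ (Fin q)))})
    (Ψb : EuclideanSpace ℝ (Fin p) → ℝ)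
    (hΨb : ∀ u, Ψb u = sInf {r | ∃ y : EuclideanSpace ℝ (Fin q),
      r = Ψ (WithLp.toLp 2 ((u, y) : EuclideanSpace ℝ (Fin p) × EuclideanSpace ℝ (Fin q)))}) :
    ConvexOn ℝ Set.univ Ψb ∧
      ∃ Ψb' : EuclideanSpace ℝ (Fin p) → EuclideanSpace ℝ (Fin p),
        (∀ u, HasGradientAt Ψb (Ψb' u) u) ∧ Continuous Ψb' ∧
          ∀ u u', dualNorm N' (Ψb' u - Ψb' u') ≤ L * N' (u - u') :=
  stmt_8_general N hN L hL Ψ Ψ' hconv hΨ hlip hmin N' hN' Ψb hΨb
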